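/- Let $\gamma$ be a curve fragment in $X$ with extension $\bar\gamma:I_\gamma\to\operatorname{sh}(X)$ obtained by interpolating linearly across gaps in the semihull, and let $\rho:X\to[0,\infty]$ be Borel with extension $\bar\rho$ to $\operatorname{sh}(X)$. Then $\int_\gamma\rho\,ds+\operatorname{gap}(\rho,\gamma)=\int_{\bar\gamma}\bar\rho\,ds$, where $\operatorname{gap}(\rho,\gamma)=\sum_i\frac{\rho(\gamma_{a_i})+\rho(\gamma_{b_i})}{2}d(\gamma_{a_i},\gamma_{b_i})$ summed over the gaps $(a_i,b_i)$ of $\gamma$. -/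

import Mathlib

open MeasureTheory Filter Topology Set
open scoped Classical
open scoped ENNReal NNReal

/-- A curve fragment: a bi-Lipschitz map from a nonempty compact subset of `ℝ` into `X`. -/
structure CurveFragment (X : Type*) [MetricSpace X] where
  toFun : ℝ → X
  dom : Set ℝ
  compact : IsCompact dom
  nonempty : dom.Nonempty
  biLip : ∃ L : ℝ, 0 < L ∧ ∀ s ∈ dom, ∀ t ∈ dom,
    L⁻¹ * |s - t| ≤ dist (toFun s) (toFun t) ∧ dist (toFun s) (toFun t) ≤ L * |s - t|

namespace CurveFragment

variable {X : Type*} [MetricSpace X]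

/-- The pairs `(a, b)` of endpoints of the gaps of a curve fragment. -/
def gapPairs (γ : CurveFragment X) : Set (ℝ × ℝ) :=
  {p | p.1 ∈ γ.dom ∧ p.2 ∈ γ.dom ∧ p.1 < p.2 ∧ Set.Ioo p.1 p.2 ∩ γ.dom = ∅}

/-- The convex hull `I_γ` of the domain of `γ`. -/
noncomputable def hull (γ : CurveFragment X) : Set ℝ := Set.Icc (sInf γ.dom) (sSup γ.dom)

/-- The left endpoint of the gap containing `t`. -/
noncomputable def gapL (γ : CurveFragment X) (t : ℝ) : ℝ := sSup (γ.dom ∩ Set.Iic t)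

/-- The right endpoint of the gap containing `t`. -/
noncomputable def gapR (γ : CurveFragment X) (t : ℝ) : ℝ := sInf (γ.dom ∩ Set.Ici t)

/-- `γ` has metric speed `v` at `t` (limit taken along the domain). -/
def HasMetricSpeed (γ : CurveFragment X) (t v : ℝ) : Prop :=
  Tendsto (fun s => dist (γ.toFun s) (γ.toFun t) / |s - t|) (𝓝[γ.dom \ {t}] t) (𝓝 v)

end CurveFragment

/-- The canonical "evaluation" embedding of `X` into functionals on real functions on `X`,
realizing the embedding of `X` into its Lipschitz free space. -/
def iotaF {X : Type*} [MetricSpace X] (x : X) : (X → ℝ) → ℝ := fun f => f x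

/-- The free-space (dual) distance with base point `x₀`. -/
noncomputable def freeDist {X : Type*} [MetricSpace X] (x₀ : X) (u v : (X → ℝ) → ℝ) : ℝ :=
  ⨆ f : {f : X → ℝ // LipschitzWith 1 f ∧ f x₀ = 0}, |u f.1 - v f.1|

variable {X : Type*} [MetricSpace X]

open CurveFragment in
/-- The extension `γ̄ : I_γ → sh(X)` of a curve fragment, interpolating linearly across the
gaps inside the semihull. -/
noncomputable def barFrag (γ : CurveFragment X) (t : ℝ) : (X → ℝ) → ℝ :=
  if t ∈ γ.dom then iotaF (γ.toFun t)
  else iotaF (γ.toFun (gapL γ t)) +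
    ((t - gapL γ t) / (gapR γ t - gapL γ t)) •
      (iotaF (γ.toFun (gapR γ t)) - iotaF (γ.toFun (gapL γ t)))

open CurveFragment in
/-- The composition `ρ̄ ∘ γ̄` of the convex extension `ρ̄` of `ρ` with the extended curve
`γ̄`, written out explicitly. -/
noncomputable def barRhoAlong (γ : CurveFragment X) (ρ : X → ℝ≥0∞) (t : ℝ) : ℝ≥0∞ :=
  if t ∈ γ.dom then ρ (γ.toFun t)
  else ENNReal.ofReal ((t - gapL γ t) / (gapR γ t - gapL γ t)) * ρ (γ.toFun (gapR γ t)) +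
    ENNReal.ofReal ((gapR γ t - t) / (gapR γ t - gapL γ t)) * ρ (γ.toFun (gapL γ t))

/-- The weighted gap functional `gap(ρ, γ) = ∑ (ρ(γ(aᵢ)) + ρ(γ(bᵢ)))/2 · d(γ(aᵢ), γ(bᵢ))`. -/
noncomputable def gapWeighted (γ : CurveFragment X) (ρ : X → ℝ≥0∞) : ℝ≥0∞ :=
  ∑' p : γ.gapPairs,
    ((ρ (γ.toFun (p : ℝ × ℝ).1) + ρ (γ.toFun (p : ℝ × ℝ).2)) / 2) *
      edist (γ.toFun (p : ℝ × ℝ).1) (γ.toFun (p : ℝ × ℝ).2)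

/-- A curve `c` in the free space has metric speed `v` at `t` along the set `S`, with respect
to the free-space distance. -/
def HasFreeSpeed (x₀ : X) (c : ℝ → (X → ℝ) → ℝ) (S : Set ℝ) (t v : ℝ) : Prop :=
  Tendsto (fun s => freeDist x₀ (c s) (c t) / |s - t|) (𝓝[S \ {t}] t) (𝓝 v)

/-!
Off the gaps `γ̄ = ι ∘ γ`, and `ι` is an isometry into the free space, so the two speeds agree at
every accumulation point of `dom γ`; the isolated points are countable, so the speeds agree almost
everywhere on `dom γ`. On a gap `(a, b)` the curve `γ̄` runs along an affine segment at the
constant speed `d(γ a, γ b) / (b - a)`, while `ρ̄ ∘ γ̄` interpolates linearly between `ρ(γ a)` and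
`ρ(γ b)`; each linear weight integrates to `(b - a) / 2` over the gap. The gaps are countably many
disjoint open intervals filling `I_γ \ dom γ`, so summing over them produces `gap(ρ, γ)`.
-/

theorem iSup_abs_sub_of_lipschitzWith_one (x₀ x y : X) :
    ⨆ f : {f : X → ℝ // LipschitzWith 1 f ∧ f x₀ = 0}, |f.1 y - f.1 x| = dist x y := by
  have hle (f : {f : X → ℝ // LipschitzWith 1 f ∧ f x₀ = 0}) : |f.1 y - f.1 x| ≤ dist x y := by
    simpa [Real.dist_eq, abs_sub_comm, dist_comm] using f.2.1.dist_le_mul y x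
  let g : {f : X → ℝ // LipschitzWith 1 f ∧ f x₀ = 0} :=
    ⟨fun z => dist z x - dist x₀ x,
      by simpa using (LipschitzWith.dist_left x).sub (LipschitzWith.const (dist x₀ x)),
      sub_self _⟩
  have : Nonempty {f : X → ℝ // LipschitzWith 1 f ∧ f x₀ = 0} := ⟨g⟩
  refine le_antisymm (ciSup_le hle) (le_ciSup_of_le ⟨_, forall_mem_range.2 hle⟩ g ?_)
  simp [g, dist_comm]

theorem freeDist_iotaF (x₀ x y : X) : freeDist x₀ (iotaF x) (iotaF y) = dist x y := by
  simpa [freeDist, iotaF, dist_comm] using iSup_abs_sub_of_lipschitzWith_one x₀ y x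

theorem freeDist_iotaF_add_smul (x₀ x y : X) (c c' : ℝ) :
    freeDist x₀ (iotaF x + c • (iotaF y - iotaF x)) (iotaF x + c' • (iotaF y - iotaF x)) =
      |c - c'| * dist x y := by
  have h (f : X → ℝ) : |(iotaF x + c • (iotaF y - iotaF x)) f -
      (iotaF x + c' • (iotaF y - iotaF x)) f| = |c - c'| * |f y - f x| := by
    rw [← abs_mul]
    simp only [Pi.add_apply, Pi.smul_apply, Pi.sub_apply, smul_eq_mul, iotaF]
    ring_nf
  simp only [freeDist, h, ← Real.mul_iSup_of_nonneg (abs_nonneg _),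
    iSup_abs_sub_of_lipschitzWith_one]

theorem ae_nhdsWithin_diff_singleton_neBot {α : Type*} [LinearOrder α] [TopologicalSpace α]
    [OrderTopology α] [SecondCountableTopology α] [MeasurableSpace α]
    [MeasurableSingletonClass α] (μ : Measure α) [NullSingletonClass μ] (s : Set α) :
    ∀ᵐ t ∂μ, t ∈ s → (𝓝[s \ {t}] t).NeBot := by
  have hnull := (countable_setOfPred_isolated_right_within (s := s)).measure_zero μ
  filter_upwards [measure_eq_zero_iff_ae_notMem.1 hnull] with t ht hts
  by_contra hbot
  refine ht ⟨hts, le_bot_iff.1 ?_⟩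
  rw [← not_neBot.1 hbot]
  exact nhdsWithin_mono t fun u hu => ⟨hu.1, (ne_of_lt hu.2).symm⟩

theorem lintegral_Ioo_ofReal_eq_intervalIntegral {f : ℝ → ℝ} {a b : ℝ} (hab : a ≤ b)
    (hf : Continuous f) (hf0 : ∀ t ∈ Ioo a b, 0 ≤ f t) :
    ∫⁻ t in Ioo a b, ENNReal.ofReal (f t) = ENNReal.ofReal (∫ t in a..b, f t) := by
  rw [intervalIntegral.integral_of_le hab, integral_Ioc_eq_integral_Ioo,
    ofReal_integral_eq_lintegral_ofReal (hf.integrableOn_Icc.mono_set Ioo_subset_Icc_self)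
      ((ae_restrict_iff' measurableSet_Ioo).2 (Eventually.of_forall hf0))]

theorem lintegral_Ioo_ofReal_sub_left_div {a b : ℝ} (hab : a < b) :
    ∫⁻ t in Ioo a b, ENNReal.ofReal ((t - a) / (b - a)) = ENNReal.ofReal ((b - a) / 2) := by
  have hba : 0 < b - a := sub_pos.2 hab
  rw [lintegral_Ioo_ofReal_eq_intervalIntegral hab.le (by fun_prop)
    fun t ht => div_nonneg (sub_nonneg.2 ht.1.le) hba.le, intervalIntegral.integral_div,
    intervalIntegral.integral_comp_sub_right (fun t => t), integral_id]
  congr 1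
  field_simp
  ring

theorem lintegral_Ioo_ofReal_sub_right_div {a b : ℝ} (hab : a < b) :
    ∫⁻ t in Ioo a b, ENNReal.ofReal ((b - t) / (b - a)) = ENNReal.ofReal ((b - a) / 2) := by
  have hba : 0 < b - a := sub_pos.2 hab
  rw [lintegral_Ioo_ofReal_eq_intervalIntegral hab.le (by fun_prop)
    fun t ht => div_nonneg (sub_nonneg.2 ht.2.le) hba.le, intervalIntegral.integral_div,
    intervalIntegral.integral_comp_sub_left (fun t => t), integral_id]
  congr 1
  field_simp
  ring

namespace CurveFragment

variable (γ : CurveFragment X) {p : ℝ × ℝ} {t : ℝ}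

theorem measurableSet_dom : MeasurableSet γ.dom :=
  γ.compact.isClosed.measurableSet

theorem measurableSet_hull : MeasurableSet γ.hull :=
  measurableSet_Icc

theorem dom_subset_hull : γ.dom ⊆ γ.hull := fun _ ht =>
  ⟨csInf_le γ.compact.bddBelow ht, le_csSup γ.compact.bddAbove ht⟩

section Gaps

variable {γ}

theorem Ioo_subset_hull_of_mem_gapPairs (hp : p ∈ γ.gapPairs) : Ioo p.1 p.2 ⊆ γ.hull :=
  fun _ ht => ⟨(γ.dom_subset_hull hp.1).1.trans ht.1.le, ht.2.le.trans (γ.dom_subset_hull hp.2.1).2⟩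

theorem notMem_dom_of_mem_gap (hp : p ∈ γ.gapPairs) (ht : t ∈ Ioo p.1 p.2) : t ∉ γ.dom :=
  fun h => (eq_empty_iff_forall_notMem.1 hp.2.2.2) t ⟨ht, h⟩

theorem gapL_eq_of_mem_gap (hp : p ∈ γ.gapPairs) (ht : t ∈ Ioo p.1 p.2) : γ.gapL t = p.1 := by
  refine le_antisymm (csSup_le ⟨p.1, hp.1, ht.1.le⟩ fun s hs => ?_)
    (le_csSup ⟨t, fun _ hs => hs.2⟩ ⟨hp.1, ht.1.le⟩)
  by_contra! hps
  exact notMem_dom_of_mem_gap hp ⟨hps, hs.2.trans_lt ht.2⟩ hs.1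

theorem gapR_eq_of_mem_gap (hp : p ∈ γ.gapPairs) (ht : t ∈ Ioo p.1 p.2) : γ.gapR t = p.2 := by
  refine le_antisymm (csInf_le ⟨t, fun _ hs => hs.2⟩ ⟨hp.2.1, ht.2.le⟩)
    (le_csInf ⟨p.2, hp.2.1, ht.2.le⟩ fun s hs => ?_)
  by_contra! hps
  exact notMem_dom_of_mem_gap hp ⟨ht.1.trans_le hs.2, hps⟩ hs.1

theorem gapL_mem (ht : t ∈ γ.hull) : γ.gapL t ∈ γ.dom ∩ Iic t :=
  (γ.compact.isClosed.inter isClosed_Iic).csSup_mem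
    ⟨sInf γ.dom, γ.compact.sInf_mem γ.nonempty, ht.1⟩ ⟨t, fun _ hs => hs.2⟩

theorem gapR_mem (ht : t ∈ γ.hull) : γ.gapR t ∈ γ.dom ∩ Ici t :=
  (γ.compact.isClosed.inter isClosed_Ici).csInf_mem
    ⟨sSup γ.dom, γ.compact.sSup_mem γ.nonempty, ht.2⟩ ⟨t, fun _ hs => hs.2⟩

theorem gapL_gapR_mem_gapPairs (ht : t ∈ γ.hull \ γ.dom) :
    (γ.gapL t, γ.gapR t) ∈ γ.gapPairs ∧ t ∈ Ioo (γ.gapL t) (γ.gapR t) := by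
  obtain ⟨hL, hLt⟩ := gapL_mem ht.1
  obtain ⟨hR, htR⟩ := gapR_mem ht.1
  have hLt' : γ.gapL t < t := hLt.lt_of_ne fun h => ht.2 (h ▸ hL)
  have htR' : t < γ.gapR t := htR.lt_of_ne' fun h => ht.2 (h ▸ hR)
  refine ⟨⟨hL, hR, hLt'.trans htR', eq_empty_iff_forall_notMem.2 ?_⟩, hLt', htR'⟩
  rintro s ⟨⟨hLs, hsR⟩, hs⟩
  rcases le_total s t with hst | hts
  · exact hLs.not_ge (le_csSup ⟨t, fun _ h => h.2⟩ ⟨hs, hst⟩)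
  · exact hsR.not_ge (csInf_le ⟨t, fun _ h => h.2⟩ ⟨hs, hts⟩)

end Gaps

theorem hull_diff_dom_eq_iUnion_gap :
    γ.hull \ γ.dom = ⋃ p : γ.gapPairs, Ioo (p : ℝ × ℝ).1 (p : ℝ × ℝ).2 := by
  ext t
  simp only [mem_iUnion]
  refine ⟨fun ht => ⟨⟨_, (gapL_gapR_mem_gapPairs ht).1⟩, (gapL_gapR_mem_gapPairs ht).2⟩, ?_⟩
  rintro ⟨⟨p, hp⟩, ht⟩
  exact ⟨Ioo_subset_hull_of_mem_gapPairs hp ht, notMem_dom_of_mem_gap hp ht⟩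

theorem pairwiseDisjoint_gapPairs : γ.gapPairs.PairwiseDisjoint fun p => Ioo p.1 p.2 := by
  intro p hp q hq hpq
  refine disjoint_left.2 fun t htp htq => hpq (Prod.ext ?_ ?_)
  · rw [← gapL_eq_of_mem_gap hp htp, gapL_eq_of_mem_gap hq htq]
  · rw [← gapR_eq_of_mem_gap hp htp, gapR_eq_of_mem_gap hq htq]

theorem countable_gapPairs : γ.gapPairs.Countable :=
  γ.pairwiseDisjoint_gapPairs.countable_of_isOpen (fun _ _ => isOpen_Ioo)
    fun _ hp => nonempty_Ioo.2 hp.2.2.1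

theorem barFrag_of_mem (ht : t ∈ γ.dom) : barFrag γ t = iotaF (γ.toFun t) :=
  if_pos ht

theorem barFrag_of_mem_gap (hp : p ∈ γ.gapPairs) (ht : t ∈ Ioo p.1 p.2) :
    barFrag γ t = iotaF (γ.toFun p.1) +
      ((t - p.1) / (p.2 - p.1)) • (iotaF (γ.toFun p.2) - iotaF (γ.toFun p.1)) := by
  rw [barFrag, if_neg (notMem_dom_of_mem_gap hp ht), gapL_eq_of_mem_gap hp ht,
    gapR_eq_of_mem_gap hp ht]

theorem barRhoAlong_of_mem (ρ : X → ℝ≥0∞) (ht : t ∈ γ.dom) :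
    barRhoAlong γ ρ t = ρ (γ.toFun t) :=
  if_pos ht

theorem barRhoAlong_of_mem_gap (ρ : X → ℝ≥0∞) (hp : p ∈ γ.gapPairs) (ht : t ∈ Ioo p.1 p.2) :
    barRhoAlong γ ρ t = ENNReal.ofReal ((t - p.1) / (p.2 - p.1)) * ρ (γ.toFun p.2) +
      ENNReal.ofReal ((p.2 - t) / (p.2 - p.1)) * ρ (γ.toFun p.1) := by
  rw [barRhoAlong, if_neg (notMem_dom_of_mem_gap hp ht), gapL_eq_of_mem_gap hp ht,
    gapR_eq_of_mem_gap hp ht]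

variable {γ} in
theorem HasMetricSpeed.eq_of_hasFreeSpeed (x₀ : X) {v w : ℝ}
    (ht : t ∈ γ.dom) (hne : (𝓝[γ.dom \ {t}] t).NeBot) (hv : γ.HasMetricSpeed t v)
    (hw : HasFreeSpeed x₀ (barFrag γ) γ.hull t w) : v = w := by
  have hw' := hw.mono_left (nhdsWithin_mono t (sdiff_subset_sdiff_left γ.dom_subset_hull))
  refine tendsto_nhds_unique hv (hw'.congr' ?_)
  filter_upwards [self_mem_nhdsWithin] with s hs
  rw [barFrag_of_mem γ hs.1, barFrag_of_mem γ ht, freeDist_iotaF]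

variable {γ} in
theorem _root_.HasFreeSpeed.eq_of_mem_gap (x₀ : X) {v : ℝ}
    (hp : p ∈ γ.gapPairs) (ht : t ∈ Ioo p.1 p.2) (hv : HasFreeSpeed x₀ (barFrag γ) γ.hull t v) :
    v = dist (γ.toFun p.1) (γ.toFun p.2) / (p.2 - p.1) := by
  have hgap : Ioo p.1 p.2 ∈ 𝓝 t := isOpen_Ioo.mem_nhds ht
  have hpunct : 𝓝[γ.hull \ {t}] t = 𝓝[≠] t := by
    rw [sdiff_eq, inter_comm, nhdsWithin_inter_of_mem'
      (mem_nhdsWithin_of_mem_nhds (mem_of_superset hgap (Ioo_subset_hull_of_mem_gapPairs hp)))]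
  rw [HasFreeSpeed, hpunct] at hv
  refine tendsto_nhds_unique hv (tendsto_const_nhds.congr' ?_)
  filter_upwards [mem_nhdsWithin_of_mem_nhds hgap, self_mem_nhdsWithin] with s hs hst
  have hba : 0 < p.2 - p.1 := sub_pos.2 hp.2.2.1
  have hst' : |s - t| ≠ 0 := abs_ne_zero.2 (sub_ne_zero.2 hst)
  rw [barFrag_of_mem_gap γ hp hs, barFrag_of_mem_gap γ hp ht, freeDist_iotaF_add_smul,
    ← sub_div, sub_sub_sub_cancel_right, abs_div, abs_of_pos hba]
  field_simp

theorem lintegral_gap_barRhoAlong (x₀ : X) (ρ : X → ℝ≥0∞) {spb : ℝ → ℝ}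
    (hspb : ∀ᵐ t ∂(volume.restrict γ.hull), HasFreeSpeed x₀ (barFrag γ) γ.hull t (spb t))
    (hp : p ∈ γ.gapPairs) :
    ∫⁻ t in Ioo p.1 p.2, barRhoAlong γ ρ t * ENNReal.ofReal (spb t) =
      (ρ (γ.toFun p.1) + ρ (γ.toFun p.2)) / 2 * edist (γ.toFun p.1) (γ.toFun p.2) := by
  obtain ⟨a, b⟩ := p
  have hab : a < b := hp.2.2.1
  set d := dist (γ.toFun a) (γ.toFun b)
  set c := ENNReal.ofReal (d / (b - a))
  have hcongr : ∀ᵐ t ∂(volume.restrict (Ioo a b)), barRhoAlong γ ρ t * ENNReal.ofReal (spb t) =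
      ENNReal.ofReal ((t - a) / (b - a)) * (ρ (γ.toFun b) * c) +
        ENNReal.ofReal ((b - t) / (b - a)) * (ρ (γ.toFun a) * c) := by
    filter_upwards [ae_restrict_of_ae_restrict_of_subset (Ioo_subset_hull_of_mem_gapPairs hp)
      hspb, ae_restrict_mem measurableSet_Ioo] with t hv ht
    rw [barRhoAlong_of_mem_gap γ ρ hp ht, hv.eq_of_mem_gap x₀ hp ht]
    ring
  have hhalf : ENNReal.ofReal ((b - a) / 2) * c = ENNReal.ofReal d / 2 := by
    rw [← ENNReal.ofReal_mul (by linarith), ← ENNReal.ofReal_ofNat 2,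
      ← ENNReal.ofReal_div_of_pos two_pos]
    congr 1
    field_simp [(sub_pos.2 hab).ne']
  rw [lintegral_congr_ae hcongr, lintegral_add_left (by fun_prop),
    lintegral_mul_const _ (by fun_prop), lintegral_mul_const _ (by fun_prop),
    lintegral_Ioo_ofReal_sub_left_div hab, lintegral_Ioo_ofReal_sub_right_div hab, edist_dist]
  calc _ = (ρ (γ.toFun a) + ρ (γ.toFun b)) * (ENNReal.ofReal ((b - a) / 2) * c) := by ring
    _ = _ := by rw [hhalf, ENNReal.div_eq_inv_mul, ENNReal.div_eq_inv_mul]; ring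

theorem lintegral_hull_diff_dom_barRhoAlong (x₀ : X) (ρ : X → ℝ≥0∞) {spb : ℝ → ℝ}
    (hspb : ∀ᵐ t ∂(volume.restrict γ.hull), HasFreeSpeed x₀ (barFrag γ) γ.hull t (spb t)) :
    ∫⁻ t in γ.hull \ γ.dom, barRhoAlong γ ρ t * ENNReal.ofReal (spb t) = gapWeighted γ ρ := by
  have := γ.countable_gapPairs.to_subtype
  rw [hull_diff_dom_eq_iUnion_gap, lintegral_iUnion (β := γ.gapPairs) (fun _ => measurableSet_Ioo)
    fun p q hpq => γ.pairwiseDisjoint_gapPairs p.property q.property (Subtype.coe_ne_coe.2 hpq)]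
  exact tsum_congr fun p => γ.lintegral_gap_barRhoAlong x₀ ρ hspb p.property

theorem lintegral_dom_barRhoAlong (x₀ : X) (ρ : X → ℝ≥0∞) {sp spb : ℝ → ℝ}
    (hsp : ∀ᵐ t ∂(volume.restrict γ.dom), γ.HasMetricSpeed t (sp t))
    (hspb : ∀ᵐ t ∂(volume.restrict γ.hull), HasFreeSpeed x₀ (barFrag γ) γ.hull t (spb t)) :
    ∫⁻ t in γ.dom, barRhoAlong γ ρ t * ENNReal.ofReal (spb t) =
      ∫⁻ t in γ.dom, ρ (γ.toFun t) * ENNReal.ofReal (sp t) := by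
  refine lintegral_congr_ae ?_
  filter_upwards [hsp, ae_restrict_of_ae_restrict_of_subset γ.dom_subset_hull hspb,
    ae_restrict_of_ae (ae_nhdsWithin_diff_singleton_neBot volume γ.dom),
    ae_restrict_mem γ.measurableSet_dom] with t hv hw hne ht
  rw [barRhoAlong_of_mem γ ρ ht, hv.eq_of_hasFreeSpeed x₀ ht (hne ht) hw]

end CurveFragment

theorem star_integral_eq_extension_general (x₀ : X)
    (γ : CurveFragment X) (ρ : X → ℝ≥0∞)
    (sp : ℝ → ℝ)
    (hsp : ∀ᵐ t ∂(volume.restrict γ.dom), γ.HasMetricSpeed t (sp t))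
    (spb : ℝ → ℝ)
    (hspb : ∀ᵐ t ∂(volume.restrict γ.hull), HasFreeSpeed x₀ (barFrag γ) γ.hull t (spb t)) :
    (∫⁻ t in γ.dom, ρ (γ.toFun t) * ENNReal.ofReal (sp t)) + gapWeighted γ ρ =
      ∫⁻ t in γ.hull, barRhoAlong γ ρ t * ENNReal.ofReal (spb t) := by
  rw [← union_sdiff_cancel γ.dom_subset_hull,
    lintegral_union (γ.measurableSet_hull.diff γ.measurableSet_dom) disjoint_sdiff_right,
    γ.lintegral_dom_barRhoAlong x₀ ρ hsp hspb,
    γ.lintegral_hull_diff_dom_barRhoAlong x₀ ρ hspb]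

/-- The `∗`-integral identity:
`∫_γ ρ ds + gap(ρ, γ) = ∫_{γ̄} ρ̄ ds`, where `γ̄` is the extension of `γ` to the semihull
and `ρ̄` the convex extension of `ρ`, the line integrals being computed with the respective
metric speeds. -/
theorem star_integral_eq_extension [MeasurableSpace X] [BorelSpace X] (x₀ : X)
    (γ : CurveFragment X) (ρ : X → ℝ≥0∞) (hρ : Measurable ρ)
    (sp : ℝ → ℝ)
    (hsp : ∀ᵐ t ∂(volume.restrict γ.dom), γ.HasMetricSpeed t (sp t))
    (spb : ℝ → ℝ)
    (hspb : ∀ᵐ t ∂(volume.restrict γ.hull), HasFreeSpeed x₀ (barFrag γ) γ.hull t (spb t)) :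
    (∫⁻ t in γ.dom, ρ (γ.toFun t) * ENNReal.ofReal (sp t)) + gapWeighted γ ρ =
      ∫⁻ t in γ.hull, barRhoAlong γ ρ t * ENNReal.ofReal (spb t) :=
  star_integral_eq_extension_general x₀ γ ρ sp hsp spb hspb
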